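/- Local monotonicity of the product drift operator. Let (V₁, H₁, i₁) and (V₂, H₂, i₂) be Gelfand triples, let α ∈ (1,∞), β ∈ [0,∞), γ > 0, C₀ > 0, L > 0, ε > 0, and let A : V₁ → V₁*, F : H₁ × H₂ → H₁, B : H₁ × V₂ → V₂* satisfy for all u, v ∈ V₁, x₁, x₂ ∈ H₁, y₁, y₂ ∈ H₂ and w, z ∈ V₂: (i) 2⟨A(u) - A(v), u - v⟩ ≤ ρ(v) ‖i₁(u - v)‖²_{H₁} where ρ : V₁ → [0,∞) satisfies ρ(v) ≤ C₀(1 + ‖v‖^α_{V₁})(1 + ‖i₁ v‖^β_{H₁}); (ii) ‖F(x₁,y₁) - F(x₂,y₂)‖_{H₁} ≤ L(‖x₁ - x₂‖_{H₁} + ‖y₁ - y₂‖_{H₂}); (iii) 2⟨B(x₁,w) - B(x₁,z), w - z⟩ ≤ -γ ‖i₂(w - z)‖²_{H₂}; (iv) ⟨B(x₁,w) - B(x₂,w), z⟩ ≤ C₀ ‖x₁ - x₂‖_{H₁} ‖i₂ z‖_{H₂}. Then there exists a constant C > 0 (depending on ε, γ, C₀, L) such that for all w₁ = (u₁, z₁),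 w₂ = (u₂, z₂) ∈ V₁ × V₂: 2⟨A(u₁) - A(u₂), u₁ - u₂⟩ + 2⟨F(i₁u₁, i₂z₁) - F(i₁u₂, i₂z₂), i₁(u₁ - u₂)⟩_{H₁} + (2/ε)⟨B(i₁u₁, z₁) - B(i₁u₂, z₂), z₁ - z₂⟩ ≤ C (1 + ‖w₂‖^α_{𝒱})(1 + ‖w₂‖^β_{ℋ}) ‖w₁ - w₂‖²_{ℋ}, where ‖(u,z)‖_{𝒱} = (‖u‖²_{V₁} + ‖z‖²_{V₂})^{1/2} and ‖(u,z)‖_{ℋ} = (‖i₁ u‖²_{H₁} + ‖i₂ z‖²_{H₂})^{1/2}. -/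

import Mathlib

/-!
Split the pairing into its three pieces. The slow part is bounded by `ρ(u₂)‖i₁(u₁ - u₂)‖²`, and
`ρ(u₂)` by `C₀` times the product weight of `w₂`, since `‖u₂‖ ≤ ‖w₂‖_𝒱` and `‖i₁ u₂‖ ≤ ‖w₂‖_ℋ`.
The coupling `F` contributes `2L(a + b)a ≤ 3L(a² + b²)` by Cauchy–Schwarz and Lipschitz continuity,
where `a`, `b` are the `H₁`, `H₂` distances. For the fast part, the dissipativity of `B` in its
second argument kills the `w`-increment, and the Lipschitz dependence on the first argument gives
`2C₀ab ≤ C₀(a² + b²)`. As the weight is at least `1`, all three bounds fit under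
`(C₀ + 3L + C₀/ε) · weight · ‖w₁ - w₂‖²_ℋ`.
-/

open Real

lemma one_add_rpow_mul_le_sqrt_sq_add_sq {p q x y s t : ℝ} (hp : 0 ≤ p) (hq : 0 ≤ q)
    (hx : 0 ≤ x) (hs : 0 ≤ s) :
    (1 + x ^ p) * (1 + s ^ q) ≤ (1 + √(x ^ 2 + y ^ 2) ^ p) * (1 + √(s ^ 2 + t ^ 2) ^ q) := by
  have hxy : x ≤ √(x ^ 2 + y ^ 2) := le_sqrt_of_sq_le (by nlinarith)
  have hst : s ≤ √(s ^ 2 + t ^ 2) := le_sqrt_of_sq_le (by nlinarith)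
  gcongr

lemma two_mul_lipschitz_mul_le {L a b : ℝ} (hL : 0 ≤ L) :
    2 * (L * (a + b) * a) ≤ 3 * L * (a ^ 2 + b ^ 2) := by
  linarith [mul_le_mul_of_nonneg_left (two_mul_le_add_sq a b) hL, mul_nonneg hL (sq_nonneg b)]

lemma two_inner_sub_le_of_lipschitz {H₁ H₂ : Type*}
    [NormedAddCommGroup H₁] [InnerProductSpace ℝ H₁] [NormedAddCommGroup H₂]
    {F : H₁ → H₂ → H₁} {L : ℝ} (hL : 0 ≤ L)
    (hF : ∀ x₁ x₂ y₁ y₂, ‖F x₁ y₁ - F x₂ y₂‖ ≤ L * (‖x₁ - x₂‖ + ‖y₁ - y₂‖))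
    (x₁ x₂ : H₁) (y₁ y₂ : H₂) :
    2 * inner ℝ (F x₁ y₁ - F x₂ y₂) (x₁ - x₂) ≤ 3 * L * (‖x₁ - x₂‖ ^ 2 + ‖y₁ - y₂‖ ^ 2) :=
  calc 2 * inner ℝ (F x₁ y₁ - F x₂ y₂) (x₁ - x₂)
      ≤ 2 * (‖F x₁ y₁ - F x₂ y₂‖ * ‖x₁ - x₂‖) := by gcongr; exact real_inner_le_norm _ _
    _ ≤ 2 * (L * (‖x₁ - x₂‖ + ‖y₁ - y₂‖) * ‖x₁ - x₂‖) := by gcongr; exact hF _ _ _ _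
    _ ≤ 3 * L * (‖x₁ - x₂‖ ^ 2 + ‖y₁ - y₂‖ ^ 2) := two_mul_lipschitz_mul_le hL

lemma two_apply_sub_le_of_dissipative {X V H : Type*} [SeminormedAddCommGroup X]
    [NormedAddCommGroup V] [NormedSpace ℝ V] [NormedAddCommGroup H] [NormedSpace ℝ H]
    (i : V →L[ℝ] H) {B : X → V → (V →L[ℝ] ℝ)} {γ C : ℝ} (hγ : 0 ≤ γ) (hC : 0 ≤ C)
    (hBmono : ∀ x w z, 2 * (B x w - B x z) (w - z) ≤ -γ * ‖i (w - z)‖ ^ 2)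
    (hBlip : ∀ x₁ x₂ w z, (B x₁ w - B x₂ w) z ≤ C * ‖x₁ - x₂‖ * ‖i z‖)
    (x₁ x₂ : X) (w₁ w₂ : V) :
    2 * (B x₁ w₁ - B x₂ w₂) (w₁ - w₂) ≤ C * (‖x₁ - x₂‖ ^ 2 + ‖i (w₁ - w₂)‖ ^ 2) := by
  have hsplit : (B x₁ w₁ - B x₂ w₂) (w₁ - w₂)
      = (B x₁ w₁ - B x₁ w₂) (w₁ - w₂) + (B x₁ w₂ - B x₂ w₂) (w₁ - w₂) := by
    simp only [sub_apply]; ring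
  have hmono := hBmono x₁ w₁ w₂
  have hlip := hBlip x₁ x₂ w₂ (w₁ - w₂)
  have hab := mul_le_mul_of_nonneg_left (two_mul_le_add_sq ‖x₁ - x₂‖ ‖i (w₁ - w₂)‖) hC
  linarith [mul_nonneg hγ (sq_nonneg ‖i (w₁ - w₂)‖)]

theorem product_drift_local_monotonicity_general
    {V₁ H₁ V₂ H₂ : Type*}
    [NormedAddCommGroup V₁] [NormedSpace ℝ V₁]
    [NormedAddCommGroup H₁] [InnerProductSpace ℝ H₁]
    [NormedAddCommGroup V₂] [NormedSpace ℝ V₂]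
    [NormedAddCommGroup H₂] [InnerProductSpace ℝ H₂]
    (i₁ : V₁ →L[ℝ] H₁)
    (i₂ : V₂ →L[ℝ] H₂)
    (α β γ C₀ L ε : ℝ) (hα : 1 < α) (hβ : 0 ≤ β) (hγ : 0 < γ) (hC₀ : 0 < C₀)
    (hL : 0 < L) (hε : 0 < ε)
    (A : V₁ → (V₁ →L[ℝ] ℝ)) (F : H₁ → H₂ → H₁) (B : H₁ → V₂ → (V₂ →L[ℝ] ℝ))
    (ρ : V₁ → ℝ)
    (hρbound : ∀ v : V₁, ρ v ≤ C₀ * (1 + ‖v‖ ^ α) * (1 + ‖i₁ v‖ ^ β))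
    (hAmono : ∀ u v : V₁, 2 * (A u - A v) (u - v) ≤ ρ v * ‖i₁ (u - v)‖ ^ 2)
    (hF : ∀ (x₁ x₂ : H₁) (y₁ y₂ : H₂),
      ‖F x₁ y₁ - F x₂ y₂‖ ≤ L * (‖x₁ - x₂‖ + ‖y₁ - y₂‖))
    (hBmono : ∀ (x : H₁) (w z : V₂),
      2 * (B x w - B x z) (w - z) ≤ -γ * ‖i₂ (w - z)‖ ^ 2)
    (hBlip : ∀ (x₁ x₂ : H₁) (w z : V₂),
      (B x₁ w - B x₂ w) z ≤ C₀ * ‖x₁ - x₂‖ * ‖i₂ z‖) :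
    ∃ C > 0, ∀ (u₁ u₂ : V₁) (z₁ z₂ : V₂),
      2 * (A u₁ - A u₂) (u₁ - u₂)
        + 2 * (inner ℝ (F (i₁ u₁) (i₂ z₁) - F (i₁ u₂) (i₂ z₂)) (i₁ (u₁ - u₂)) : ℝ)
        + (2 / ε) * (B (i₁ u₁) z₁ - B (i₁ u₂) z₂) (z₁ - z₂)
      ≤ C * (1 + Real.sqrt (‖u₂‖ ^ 2 + ‖z₂‖ ^ 2) ^ α)
          * (1 + Real.sqrt (‖i₁ u₂‖ ^ 2 + ‖i₂ z₂‖ ^ 2) ^ β)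
          * Real.sqrt (‖i₁ (u₁ - u₂)‖ ^ 2 + ‖i₂ (z₁ - z₂)‖ ^ 2) ^ 2 := by
  refine ⟨C₀ + 3 * L + C₀ / ε, by positivity, fun u₁ u₂ z₁ z₂ => ?_⟩
  set K := (1 + √(‖u₂‖ ^ 2 + ‖z₂‖ ^ 2) ^ α) * (1 + √(‖i₁ u₂‖ ^ 2 + ‖i₂ z₂‖ ^ 2) ^ β)
  set S := ‖i₁ (u₁ - u₂)‖ ^ 2 + ‖i₂ (z₁ - z₂)‖ ^ 2
  have hweight := one_add_rpow_mul_le_sqrt_sq_add_sq (p := α) (y := ‖z₂‖) (t := ‖i₂ z₂‖)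
    (by linarith) hβ (norm_nonneg u₂) (norm_nonneg (i₁ u₂))
  have hK : 1 ≤ K := (one_le_mul_of_one_le_of_one_le
    (le_add_of_nonneg_right (by positivity)) (le_add_of_nonneg_right (by positivity))).trans hweight
  have hslow : 2 * (A u₁ - A u₂) (u₁ - u₂) ≤ C₀ * K * ‖i₁ (u₁ - u₂)‖ ^ 2 := by
    refine (hAmono u₁ u₂).trans (mul_le_mul_of_nonneg_right ?_ (sq_nonneg _))
    exact (hρbound u₂).trans ((mul_assoc _ _ _).trans_le (mul_le_mul_of_nonneg_left hweight hC₀.le))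
  have hcoupling := two_inner_sub_le_of_lipschitz hL.le hF (i₁ u₁) (i₁ u₂) (i₂ z₁) (i₂ z₂)
  have hfast := two_apply_sub_le_of_dissipative i₂ hγ.le hC₀.le hBmono hBlip (i₁ u₁) (i₁ u₂) z₁ z₂
  simp only [← map_sub] at hcoupling hfast
  have hfast' : (2 / ε) * (B (i₁ u₁) z₁ - B (i₁ u₂) z₂) (z₁ - z₂) ≤ C₀ / ε * S := by
    rw [div_mul_eq_mul_div, div_mul_eq_mul_div]
    exact div_le_div_of_nonneg_right hfast hε.le
  have hrhs : (C₀ + 3 * L + C₀ / ε) * (1 + √(‖u₂‖ ^ 2 + ‖z₂‖ ^ 2) ^ α)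
      * (1 + √(‖i₁ u₂‖ ^ 2 + ‖i₂ z₂‖ ^ 2) ^ β) * √S ^ 2 = (C₀ + 3 * L + C₀ / ε) * K * S := by
    rw [sq_sqrt (by positivity)]; ring
  have haS : ‖i₁ (u₁ - u₂)‖ ^ 2 ≤ S := le_add_of_nonneg_right (sq_nonneg _)
  rw [hrhs]
  linarith [mul_le_mul_of_nonneg_left hK (by positivity : 0 ≤ (3 * L + C₀ / ε) * S),
    mul_le_mul_of_nonneg_left haS (by positivity : 0 ≤ C₀ * K)]

/-- Local monotonicity of the product (slow-fast) drift operator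
`Ã(x,y) = (A(x) + F(x,y), (1/ε) B(x,y))` on the product Gelfand triple
`𝒱 = V₁ × V₂ ⊆ ℋ = H₁ × H₂ ⊆ 𝒱*` (Appendix proof of Theorem 2.2). -/
theorem product_drift_local_monotonicity
    {V₁ H₁ V₂ H₂ : Type*}
    [NormedAddCommGroup V₁] [NormedSpace ℝ V₁]
    [NormedAddCommGroup H₁] [InnerProductSpace ℝ H₁] [CompleteSpace H₁]
    [TopologicalSpace.SeparableSpace H₁]
    [NormedAddCommGroup V₂] [NormedSpace ℝ V₂]
    [NormedAddCommGroup H₂] [InnerProductSpace ℝ H₂] [CompleteSpace H₂]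
    [TopologicalSpace.SeparableSpace H₂]
    (i₁ : V₁ →L[ℝ] H₁) (hi₁inj : Function.Injective i₁) (hi₁dense : DenseRange i₁)
    (i₂ : V₂ →L[ℝ] H₂) (hi₂inj : Function.Injective i₂) (hi₂dense : DenseRange i₂)
    (α β γ C₀ L ε : ℝ) (hα : 1 < α) (hβ : 0 ≤ β) (hγ : 0 < γ) (hC₀ : 0 < C₀)
    (hL : 0 < L) (hε : 0 < ε)
    (A : V₁ → (V₁ →L[ℝ] ℝ)) (F : H₁ → H₂ → H₁) (B : H₁ → V₂ → (V₂ →L[ℝ] ℝ))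
    (ρ : V₁ → ℝ) (hρ0 : ∀ v, 0 ≤ ρ v)
    (hρbound : ∀ v : V₁, ρ v ≤ C₀ * (1 + ‖v‖ ^ α) * (1 + ‖i₁ v‖ ^ β))
    (hAmono : ∀ u v : V₁, 2 * (A u - A v) (u - v) ≤ ρ v * ‖i₁ (u - v)‖ ^ 2)
    (hF : ∀ (x₁ x₂ : H₁) (y₁ y₂ : H₂),
      ‖F x₁ y₁ - F x₂ y₂‖ ≤ L * (‖x₁ - x₂‖ + ‖y₁ - y₂‖))
    (hBmono : ∀ (x : H₁) (w z : V₂),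
      2 * (B x w - B x z) (w - z) ≤ -γ * ‖i₂ (w - z)‖ ^ 2)
    (hBlip : ∀ (x₁ x₂ : H₁) (w z : V₂),
      (B x₁ w - B x₂ w) z ≤ C₀ * ‖x₁ - x₂‖ * ‖i₂ z‖) :
    ∃ C > 0, ∀ (u₁ u₂ : V₁) (z₁ z₂ : V₂),
      2 * (A u₁ - A u₂) (u₁ - u₂)
        + 2 * (inner ℝ (F (i₁ u₁) (i₂ z₁) - F (i₁ u₂) (i₂ z₂)) (i₁ (u₁ - u₂)) : ℝ)
        + (2 / ε) * (B (i₁ u₁) z₁ - B (i₁ u₂) z₂) (z₁ - z₂)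
      ≤ C * (1 + Real.sqrt (‖u₂‖ ^ 2 + ‖z₂‖ ^ 2) ^ α)
          * (1 + Real.sqrt (‖i₁ u₂‖ ^ 2 + ‖i₂ z₂‖ ^ 2) ^ β)
          * Real.sqrt (‖i₁ (u₁ - u₂)‖ ^ 2 + ‖i₂ (z₁ - z₂)‖ ^ 2) ^ 2 :=
  product_drift_local_monotonicity_general i₁ i₂ α β γ C₀ L ε hα hβ hγ hC₀ hL hε A F B ρ hρbound
    hAmono hF hBmono hBlip
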